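/- arXiv:2105.09184 — 3 statements merged into one kernel-verified Lean document; each statement's English description precedes it below -/
import Mathlib

section
/- Consider so(n) with basis vectors ξ_{ab} = E_{ab} - E_{ba}, and the subspaces m_{12} = span{ξ_{12}}, m_{13} = span{ξ_{13}, ..., ξ_{1n}}, m_{23} = span{ξ_{23}, ..., ξ_{2n}} of the tangent space of the Stiefel manifold V_2 R^n = SO(n)/SO(n-2). A vector X = a_{12}ξ_{12} + Σ_{j=3}^n a_{1j}ξ_{1j} + Σ_{j=3}^n a_{2j}ξ_{2j} satisfies [X_{12}, X_{13}]_m = [X_{12}, X_{23}]_m = [X_{13}, X_{23}]_m = 0 (projection onto m = m_{12} ⊕ m_{13} ⊕ m_{23} along so(n-2)) if and only if a_{12}a_{1j} = 0 and a_{12}a_{2j} = 0 for all 3 ≤ j ≤ n, and Σ_{j=3}^n a_{1j}a_{2j} = 0. -/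
open Matrix

/-- `ξ a b = E_{ab} - E_{ba}` in the n×n real matrices. -/
noncomputable def xiM {n : ℕ} (a b : Fin n) : Matrix (Fin n) (Fin n) ℝ :=
  Matrix.single a b 1 - Matrix.single b a 1

/-- Projection of `so(n)` onto `m` (entries with a row or column index in `{1,2}`,
0-based `{0,1}`) along `so(n-2)` (entries supported in rows and columns `3,…,n`). -/
noncomputable def projV (n : ℕ) (A : Matrix (Fin n) (Fin n) ℝ) :
    Matrix (Fin n) (Fin n) ℝ :=
  Matrix.of fun i j => if i.val < 2 ∨ j.val < 2 then A i j else 0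

/-!
For `3 ≤ j, k ≤ n`, the bracket relations `[ξ₁₂, ξ₁ⱼ] = -ξ₂ⱼ`, `[ξ₁₂, ξ₂ⱼ] = ξ₁ⱼ`,
`[ξ₁ⱼ, ξ₂ⱼ] = -ξ₁₂` and `[ξ₁ⱼ, ξ₂ₖ] = 0` for `j ≠ k` give
`[X₁₂, X₁₃] = -∑ a₁₂ a₁ⱼ ξ₂ⱼ`, `[X₁₂, X₂₃] = ∑ a₁₂ a₂ⱼ ξ₁ⱼ` and `[X₁₃, X₂₃] = -(∑ a₁ⱼ a₂ⱼ) ξ₁₂`.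
All three already lie in `m`, so the projection does nothing, and the `ξ`'s occurring in each
are linearly independent, so each bracket vanishes iff its coefficients do.
-/

lemma xiM_apply {n : ℕ} (a b i j : Fin n) :
    xiM a b i j = (if a = i ∧ b = j then 1 else 0) - (if b = i ∧ a = j then 1 else 0) := by
  simp [xiM, single]

section Brackets

variable {n : ℕ} {a b c : Fin n}

lemma lie_xiM_xiM_same_fst (hab : a ≠ b) (hac : a ≠ c) (hbc : b ≠ c) :
    ⁅xiM a b, xiM a c⁆ = -xiM b c := by
  simp only [Ring.lie_def, xiM, sub_mul, mul_sub, mul_one, single_mul_single_same,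
    single_mul_single_of_ne, hab, hac, hbc, hab.symm, hac.symm, hbc.symm, Ne, not_false_iff]
  abel

lemma lie_xiM_xiM_snd_fst (hab : a ≠ b) (hac : a ≠ c) (hbc : b ≠ c) :
    ⁅xiM a b, xiM b c⁆ = xiM a c := by
  simp only [Ring.lie_def, xiM, sub_mul, mul_sub, mul_one, single_mul_single_same,
    single_mul_single_of_ne, hab, hac, hbc, hab.symm, hac.symm, hbc.symm, Ne, not_false_iff]
  abel

lemma lie_xiM_xiM_same_snd (hab : a ≠ b) (hac : a ≠ c) (hbc : b ≠ c) :
    ⁅xiM a c, xiM b c⁆ = -xiM a b := by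
  simp only [Ring.lie_def, xiM, sub_mul, mul_sub, mul_one, single_mul_single_same,
    single_mul_single_of_ne, hab, hac, hbc, hab.symm, hac.symm, hbc.symm, Ne, not_false_iff]
  abel

lemma lie_xiM_xiM_of_disjoint {d : Fin n} (hac : a ≠ c) (had : a ≠ d) (hbc : b ≠ c)
    (hbd : b ≠ d) : ⁅xiM a b, xiM c d⁆ = 0 := by
  simp only [Ring.lie_def, xiM, sub_mul, mul_sub, single_mul_single_of_ne,
    hac, had, hbc, hbd, hac.symm, had.symm, hbc.symm, hbd.symm, Ne, not_false_iff]
  abel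

attribute [local instance] LieRing.ofAssociativeRing

variable {s : Finset (Fin n)} (t : ℝ) (f g : Fin n → ℝ)

lemma lie_smul_xiM_sum_smul_xiM_fst (hab : a ≠ b) (ha : a ∉ s) (hb : b ∉ s) :
    ⁅t • xiM a b, ∑ j ∈ s, f j • xiM a j⁆ = ∑ j ∈ s, (-(t * f j)) • xiM b j := by
  rw [lie_sum]
  refine Finset.sum_congr rfl fun j hj => ?_
  rw [smul_lie, lie_smul, lie_xiM_xiM_same_fst hab (ne_of_mem_of_not_mem hj ha).symm
    (ne_of_mem_of_not_mem hj hb).symm]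
  simp only [smul_neg, smul_smul, neg_smul]

lemma lie_smul_xiM_sum_smul_xiM_snd (hab : a ≠ b) (ha : a ∉ s) (hb : b ∉ s) :
    ⁅t • xiM a b, ∑ j ∈ s, f j • xiM b j⁆ = ∑ j ∈ s, (t * f j) • xiM a j := by
  rw [lie_sum]
  refine Finset.sum_congr rfl fun j hj => ?_
  rw [smul_lie, lie_smul, lie_xiM_xiM_snd_fst hab (ne_of_mem_of_not_mem hj ha).symm
    (ne_of_mem_of_not_mem hj hb).symm, smul_smul]

lemma lie_sum_smul_xiM_sum_smul_xiM (hab : a ≠ b) (ha : a ∉ s) (hb : b ∉ s) :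
    ⁅∑ i ∈ s, f i • xiM a i, ∑ j ∈ s, g j • xiM b j⁆ = (-∑ j ∈ s, f j * g j) • xiM a b := by
  have diagonal :
      ∀ i ∈ s, ⁅f i • xiM a i, ∑ j ∈ s, g j • xiM b j⁆ = (-(f i * g i)) • xiM a b := by
    intro i hi
    rw [lie_sum, Finset.sum_eq_single_of_mem i hi]
    · rw [smul_lie, lie_smul, lie_xiM_xiM_same_snd hab (ne_of_mem_of_not_mem hi ha).symm
        (ne_of_mem_of_not_mem hi hb).symm]
      simp only [smul_neg, smul_smul, neg_smul]
    · intro j hj hji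
      rw [smul_lie, lie_smul, lie_xiM_xiM_of_disjoint hab (ne_of_mem_of_not_mem hj ha).symm
        (ne_of_mem_of_not_mem hi hb) (Ne.symm hji), smul_zero, smul_zero]
  rw [sum_lie, Finset.sum_congr rfl diagonal, ← Finset.sum_smul, Finset.sum_neg_distrib]

end Brackets

section Independence

variable {n : ℕ} {a b : Fin n}

lemma smul_xiM_eq_zero_iff (hab : a ≠ b) (t : ℝ) : t • xiM a b = 0 ↔ t = 0 := by
  refine ⟨fun h => ?_, fun h => by rw [h, zero_smul]⟩
  simpa [xiM_apply, hab] using congrFun (congrFun h a) b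

lemma sum_smul_xiM_eq_zero_iff {s : Finset (Fin n)} (hb : b ∉ s) (f : Fin n → ℝ) :
    ∑ j ∈ s, f j • xiM b j = 0 ↔ ∀ j ∈ s, f j = 0 := by
  refine ⟨fun h j hj => ?_, fun h => Finset.sum_eq_zero fun j hj => by rw [h j hj, zero_smul]⟩
  have entry := congrFun (congrFun h b) j
  rw [Matrix.sum_apply, Finset.sum_eq_single_of_mem j hj] at entry
  · simpa [xiM_apply, ne_of_mem_of_not_mem hj hb] using entry
  · intro k _ hkj
    simp [xiM_apply, hkj, (ne_of_mem_of_not_mem hj hb).symm]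

end Independence

section Projection

variable {n : ℕ} {a : Fin n}

lemma projV_eq_self {A : Matrix (Fin n) (Fin n) ℝ}
    (h : ∀ i j : Fin n, 2 ≤ i.val → 2 ≤ j.val → A i j = 0) : projV n A = A := by
  ext i j
  simp only [projV, of_apply]
  split_ifs with hij
  · rfl
  · rw [not_or, not_lt, not_lt] at hij
    exact (h i j hij.1 hij.2).symm

lemma xiM_apply_eq_zero (ha : a.val < 2) (b : Fin n) {i j : Fin n} (hi : 2 ≤ i.val)
    (hj : 2 ≤ j.val) : xiM a b i j = 0 := by
  have hai : a ≠ i := Fin.ne_of_val_ne (by omega)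
  have haj : a ≠ j := Fin.ne_of_val_ne (by omega)
  simp [xiM_apply, hai, haj]

lemma projV_smul_xiM (ha : a.val < 2) (b : Fin n) (t : ℝ) :
    projV n (t • xiM a b) = t • xiM a b :=
  projV_eq_self fun _ _ hi hj => by
    rw [Matrix.smul_apply, xiM_apply_eq_zero ha b hi hj, smul_zero]

lemma projV_sum_smul_xiM (ha : a.val < 2) (s : Finset (Fin n)) (f : Fin n → ℝ) :
    projV n (∑ j ∈ s, f j • xiM a j) = ∑ j ∈ s, f j • xiM a j :=
  projV_eq_self fun _ _ hi hj => by
    simp only [Matrix.sum_apply, Matrix.smul_apply, xiM_apply_eq_zero ha _ hi hj, smul_zero,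
      Finset.sum_const_zero]

end Projection

theorem stmt6 (n : ℕ) (hn : 2 ≤ n) (a12 : ℝ) (a1 a2 : Fin n → ℝ) :
    let i0 : Fin n := ⟨0, by omega⟩
    let i1 : Fin n := ⟨1, by omega⟩
    let X12 := a12 • xiM i0 i1
    let X13 := ∑ j ∈ Finset.univ.filter (fun j : Fin n => 2 ≤ j.val),
      a1 j • xiM i0 j
    let X23 := ∑ j ∈ Finset.univ.filter (fun j : Fin n => 2 ≤ j.val),
      a2 j • xiM i1 j
    (projV n ⁅X12, X13⁆ = 0 ∧ projV n ⁅X12, X23⁆ = 0 ∧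
        projV n ⁅X13, X23⁆ = 0) ↔
      ((∀ j : Fin n, 2 ≤ j.val → a12 * a1 j = 0 ∧ a12 * a2 j = 0) ∧
        ∑ j ∈ Finset.univ.filter (fun j : Fin n => 2 ≤ j.val),
          a1 j * a2 j = 0) := by
  intro i0 i1 X12 X13 X23
  have h01 : i0 ≠ i1 := by simp [i0, i1]
  have h0 : i0 ∉ Finset.univ.filter (fun j : Fin n => 2 ≤ j.val) := by simp [i0]
  have h1 : i1 ∉ Finset.univ.filter (fun j : Fin n => 2 ≤ j.val) := by simp [i1]
  rw [lie_smul_xiM_sum_smul_xiM_fst _ _ h01 h0 h1, lie_smul_xiM_sum_smul_xiM_snd _ _ h01 h0 h1,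
    lie_sum_smul_xiM_sum_smul_xiM _ _ h01 h0 h1, projV_sum_smul_xiM (by simp [i1]),
    projV_sum_smul_xiM (by simp [i0]), projV_smul_xiM (by simp [i0]),
    sum_smul_xiM_eq_zero_iff h1, sum_smul_xiM_eq_zero_iff h0, smul_xiM_eq_zero_iff h01]
  simp only [Finset.mem_filter, Finset.mem_univ, true_and, neg_eq_zero, ← and_assoc,
    ← forall_and]
end

section
/- In so(n) with m = m_{12} ⊕ m_{13} ⊕ m_{23} as in the Stiefel manifold V_2 R^n, any vector of the form X = a_{13}ξ_{13} + Σ_{j=4}^n a_{2j}ξ_{2j} (i.e., with a_{12} = 0, a_{1j} = 0 for j ≥ 4, and a_{23} = 0) satisfies [X, ΛX]_m = 0 for every operator Λ = λ_{12} Id_{m_{12}} + λ_{13} Id_{m_{13}} + λ_{23} Id_{m_{23}} with positive λ's; that is, X is an equigeodesic vector. -/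
open Matrix

/-! Both summands of `X` are built from generators `ξ_{ab}` on disjoint index pairs
(`{1,3}` against `{2,j}` with `j ≥ 4`), so they commute; then `X` commutes with
`ΛX`, a linear combination of them, and the bracket vanishes before projecting. -/

lemma xiM_mul_xiM_of_disjoint {n : ℕ} {a b c d : Fin n} (hac : a ≠ c) (had : a ≠ d)
    (hbc : b ≠ c) (hbd : b ≠ d) : xiM a b * xiM c d = 0 := by
  simp [xiM, sub_mul, mul_sub, Matrix.single_mul_single_of_ne, hbc, hbd, hac, had]

lemma commute_xiM_of_disjoint {n : ℕ} {a b c d : Fin n} (hac : a ≠ c) (had : a ≠ d)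
    (hbc : b ≠ c) (hbd : b ≠ d) : Commute (xiM a b) (xiM c d) := by
  rw [Commute, SemiconjBy, xiM_mul_xiM_of_disjoint hac had hbc hbd,
    xiM_mul_xiM_of_disjoint hac.symm hbc.symm had.symm hbd.symm]

lemma lie_add_smul_add_smul_eq_zero {R A : Type*} [CommRing R] [Ring A] [Algebra R A]
    {x y : A} (h : Commute x y) (s t : R) : ⁅x + y, s • x + t • y⁆ = 0 :=
  commute_iff_lie_eq.mp <|
    (((Commute.refl x).smul_right s).add_right (h.smul_right t)).add_left
      ((h.symm.smul_right s).add_right ((Commute.refl y).smul_right t))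

lemma projV_zero (n : ℕ) : projV n 0 = 0 := by
  ext i j
  simp [projV]

/-- Any vector `X = a₁₃ ξ₁₃ + Σ_{j=4}^n a_{2j} ξ_{2j}` is an equigeodesic
vector on the Stiefel manifold `V₂ℝⁿ`: `[X, ΛX]_m = 0` for every invariant
metric `Λ = λ₁₂ Id_{m₁₂} + λ₁₃ Id_{m₁₃} + λ₂₃ Id_{m₂₃}` with positive `λ`'s. -/
theorem stmt7 (n : ℕ) (hn : 3 ≤ n) (a13 : ℝ) (a2 : Fin n → ℝ) :
    let i0 : Fin n := ⟨0, by omega⟩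
    let i1 : Fin n := ⟨1, by omega⟩
    let i2 : Fin n := ⟨2, by omega⟩
    let X12 : Matrix (Fin n) (Fin n) ℝ := 0
    let X13 := a13 • xiM i0 i2
    let X23 := ∑ j ∈ Finset.univ.filter (fun j : Fin n => 3 ≤ j.val),
      a2 j • xiM i1 j
    ∀ l12 l13 l23 : ℝ, 0 < l12 → 0 < l13 → 0 < l23 →
      projV n ⁅X12 + X13 + X23, l12 • X12 + l13 • X13 + l23 • X23⁆ = 0 := by
  intro i0 i1 i2 X12 X13 X23 l12 l13 l23 _ _ _
  have hcomm : Commute X13 X23 := by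
    refine (Commute.sum_right _ _ _ fun j hj => ?_).smul_left a13
    have hj3 : 3 ≤ j.val := (Finset.mem_filter.mp hj).2
    refine (commute_xiM_of_disjoint ?_ ?_ ?_ ?_).smul_right (a2 j) <;>
      simp only [ne_eq, Fin.ext_iff, i0, i1, i2] <;> omega
  simp only [X12, smul_zero, zero_add]
  rw [lie_add_smul_add_smul_eq_zero hcomm, projV_zero]
end

section
/- For the sphere S^{2n+1} = U(n+1)/U(n): let m_1 = span{f_{11}} and m_2 = span{e_{1j}, f_{1j} : 2 ≤ j ≤ n+1} inside u(n+1), where e_{1j} = E_{1j} - E_{j1} and f_{1j} = i(E_{1j} + E_{j1}), f_{11} = 2i·E_{11}. Then for X_1 = α·f_{11} ∈ m_1 and X_2 = Σ_{j=2}^{n+1}(α_j e_{1j} + β_j f_{1j}) ∈ m_2, the projection of [X_1, X_2] onto m := m_1 ⊕ m_2 (along the embedded u(n)) vanishes if and only if α = 0 or all α_j = β_j = 0. Consequently, the only equigeodesic vectors X = X_1 + X_2 are the trivial ones lying entirely in m_1 or entirely in m_2. -/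
open Matrix

/-- `e_{1j} = E_{1j} - E_{j1}` in the (n+1)×(n+1) complex matrices
(0-based: row/column 0 plays the role of index 1). -/
noncomputable def eS {n : ℕ} (j : Fin (n + 1)) :
    Matrix (Fin (n + 1)) (Fin (n + 1)) ℂ :=
  Matrix.single 0 j 1 - Matrix.single j 0 1

/-- `f_{1j} = i(E_{1j} + E_{j1})`; in particular `f_{11} = 2i·E_{11}`. -/
noncomputable def fS {n : ℕ} (j : Fin (n + 1)) :
    Matrix (Fin (n + 1)) (Fin (n + 1)) ℂ :=
  Matrix.single 0 j Complex.I + Matrix.single j 0 Complex.I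

/-- Projection of `u(n+1)` onto `m = m₁ ⊕ m₂` (entries in the first row or
column) along the embedded `u(n)` (the lower-right n×n block). -/
noncomputable def projS {n : ℕ} (A : Matrix (Fin (n + 1)) (Fin (n + 1)) ℂ) :
    Matrix (Fin (n + 1)) (Fin (n + 1)) ℂ :=
  Matrix.of fun i j => if i = 0 ∨ j = 0 then A i j else 0

/-! Since `X₁ = 2αi·E₁₁`, for `k ≠ 1` the `(1,k)` entry of `[X₁, X₂]`, which the projection onto
`m` keeps, is `2αi(α_k + iβ_k)`. Equigeodesy reduces to `[X₁, X₂]_m = 0` because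
`[X₁ + X₂, λ₁X₁ + λ₂X₂] = (λ₂ - λ₁)[X₁, X₂]`. -/

theorem Ring.lie_add_smul_add_smul {R A : Type*} [CommRing R] [Ring A] [Algebra R A]
    (x y : A) (a b : R) : ⁅x + y, a • x + b • y⁆ = (b - a) • ⁅x, y⁆ := by
  simp only [Ring.lie_def, add_mul, mul_add, mul_smul_comm, smul_mul_assoc]
  module

theorem Matrix.single_eq_zero_iff {m n α : Type*} [DecidableEq m] [DecidableEq n] [Zero α]
    {i : m} {j : n} {a : α} : single i j a = 0 ↔ a = 0 :=
  ⟨fun h => by simpa using congr_fun (congr_fun h i) j, fun h => h ▸ single_zero i j⟩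

theorem Matrix.lie_single_apply_of_ne {ι R : Type*} [Fintype ι] [DecidableEq ι] [Ring R]
    {i k : ι} (hk : k ≠ i) (c : R) (B : Matrix ι ι R) :
    ⁅single i i c, B⁆ i k = c * B i k := by
  rw [Ring.lie_def, sub_apply, single_mul_apply_same, mul_single_apply_of_ne _ _ _ _ _ hk,
    sub_zero]

theorem Complex.ofReal_add_ofReal_mul_I_eq_zero {a b : ℝ} :
    (a : ℂ) + b * Complex.I = 0 ↔ a = 0 ∧ b = 0 := by
  simp [Complex.ext_iff]

section Sphere

variable {n : ℕ}

theorem fS_zero : fS (0 : Fin (n + 1)) = single 0 0 (2 * Complex.I) := by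
  rw [fS, ← Matrix.single_add, two_mul]

theorem projS_smul {S : Type*} [SMulZeroClass S ℂ] (c : S)
    (A : Matrix (Fin (n + 1)) (Fin (n + 1)) ℂ) : projS (c • A) = c • projS A := by
  ext i j
  simp only [projS, of_apply, Matrix.smul_apply]
  split_ifs <;> simp

theorem projS_zero : projS (0 : Matrix (Fin (n + 1)) (Fin (n + 1)) ℂ) = 0 := by
  ext i j
  simp [projS]

noncomputable def m₂Elem (av bv : Fin (n + 1) → ℝ) : Matrix (Fin (n + 1)) (Fin (n + 1)) ℂ :=
  ∑ j ∈ Finset.univ.filter (fun j : Fin (n + 1) => j ≠ 0), (av j • eS j + bv j • fS j)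

theorem m₂Elem_apply_zero_of_ne (av bv : Fin (n + 1) → ℝ) {k : Fin (n + 1)} (hk : k ≠ 0) :
    m₂Elem av bv 0 k = av k + bv k * Complex.I := by
  simp [m₂Elem, Matrix.sum_apply, eS, fS, single_apply, eq_comm (a := (0 : Fin (n + 1))),
    Finset.sum_add_distrib, hk]

theorem m₂Elem_eq_zero_iff (av bv : Fin (n + 1) → ℝ) :
    m₂Elem av bv = 0 ↔ ∀ j : Fin (n + 1), j ≠ 0 → av j = 0 ∧ bv j = 0 := by
  refine ⟨fun h j hj => ?_, fun h => Finset.sum_eq_zero fun j hj => ?_⟩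
  · rw [← Complex.ofReal_add_ofReal_mul_I_eq_zero, ← m₂Elem_apply_zero_of_ne av bv hj, h,
      Matrix.zero_apply]
  · obtain ⟨ha, hb⟩ := h j (Finset.mem_filter.mp hj).2
    simp [ha, hb]

theorem projS_lie_smul_fS_zero_m₂Elem_eq_zero_iff (α : ℝ) (av bv : Fin (n + 1) → ℝ) :
    projS ⁅α • fS (0 : Fin (n + 1)), m₂Elem av bv⁆ = 0 ↔ α = 0 ∨ m₂Elem av bv = 0 := by
  refine ⟨fun h => or_iff_not_imp_left.mpr fun hα => ?_, ?_⟩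
  · refine (m₂Elem_eq_zero_iff av bv).mpr fun k hk => ?_
    have hk0 := congr_fun (congr_fun h 0) k
    rw [fS_zero, Matrix.smul_single, projS, of_apply, if_pos (Or.inl rfl),
      Matrix.lie_single_apply_of_ne hk, m₂Elem_apply_zero_of_ne av bv hk,
      Matrix.zero_apply] at hk0
    exact Complex.ofReal_add_ofReal_mul_I_eq_zero.mp
      ((mul_eq_zero.mp hk0).resolve_left (by simp [hα]))
  · rintro (rfl | h)
    · simp [Ring.lie_def, projS_zero]
    · simp [Ring.lie_def, projS_zero, h]

end Sphere

/-- On `S^{2n+1} = U(n+1)/U(n)`: the projection onto `m` of `[X₁, X₂]`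
vanishes iff `α = 0` or all the coefficients of `X₂` vanish; consequently the
only equigeodesic vectors `X = X₁ + X₂` are those lying entirely in `m₁`
or entirely in `m₂`. -/
theorem stmt13 (n : ℕ) (α : ℝ) (av bv : Fin (n + 1) → ℝ) :
    let X1 := α • fS (0 : Fin (n + 1))
    let X2 := ∑ j ∈ Finset.univ.filter (fun j : Fin (n + 1) => j ≠ 0),
      (av j • eS j + bv j • fS j)
    (projS ⁅X1, X2⁆ = 0 ↔
      (α = 0 ∨ ∀ j : Fin (n + 1), j ≠ 0 → av j = 0 ∧ bv j = 0)) ∧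
    ((∀ l1 l2 : ℝ, 0 < l1 → 0 < l2 →
        projS ⁅X1 + X2, l1 • X1 + l2 • X2⁆ = 0) ↔
      (X1 = 0 ∨ X2 = 0)) := by
  intro X1 X2
  have hX1 : X1 = 0 ↔ α = 0 := by
    simp [X1, fS_zero, Matrix.smul_single, Matrix.single_eq_zero_iff]
  have hX2 : X2 = m₂Elem av bv := rfl
  have hbracket : projS ⁅X1, X2⁆ = 0 ↔ X1 = 0 ∨ X2 = 0 := by
    rw [hX1, hX2]
    exact projS_lie_smul_fS_zero_m₂Elem_eq_zero_iff α av bv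
  refine ⟨by rw [hbracket, hX1, hX2, m₂Elem_eq_zero_iff], ?_⟩
  rw [← hbracket]
  refine ⟨fun h => ?_, fun h l1 l2 _ _ => ?_⟩
  · have h12 := h 1 2 one_pos two_pos
    rw [Ring.lie_add_smul_add_smul, projS_smul, smul_eq_zero] at h12
    exact h12.resolve_left (by norm_num)
  · rw [Ring.lie_add_smul_add_smul, projS_smul, h, smul_zero]
end
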